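/- arXiv:2505.20839 — 2 statements merged into one kernel-verified Lean document; each statement's English description precedes it below -/
import Mathlib

section
/- Let T ≥ 1 and B ≥ 1, and let s : {1,…,T} → ({1,…,B} → ℝ) be T blocks of attention scores. Define recursively m_1 = max_k s_1(k), l_1 = Σ_k e^{s_1(k) − m_1}, and for 2 ≤ j ≤ T: m_j = max(m_{j−1}, max_k s_j(k)) and l_j = e^{m_{j−1} − m_j} · l_{j−1} + Σ_k e^{s_j(k) − m_j}. Then m_T = max_{j,k} s_j(k) is the global maximum over all T·B scores, and l_T = Σ_{j=1}^{T} Σ_{k=1}^{B} e^{s_j(k) − m_T} is the max-shifted softmax denominator over all scores. -/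
/-- Online softmax correctness (normalizer): streaming over score blocks `j = 0,…,T−1`
(0-indexed) with the running maximum `m` and rescaled exponential sum `l`, after the last
block `m (T−1)` is the global maximum over all `T·B` scores and `l (T−1)` is the
max-shifted softmax denominator over all scores. -/
theorem online_softmax_normalizer (T B : ℕ) (hT : 1 ≤ T) (hB : 1 ≤ B)
    (s : Fin T → Fin B → ℝ) (m l : ℕ → ℝ)
    (hm0 : m 0 = Finset.univ.sup' (Finset.univ_nonempty_iff.mpr ⟨⟨0, hB⟩⟩) (s ⟨0, hT⟩))
    (hl0 : l 0 = ∑ k, Real.exp (s ⟨0, hT⟩ k - m 0))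
    (hm : ∀ j : Fin T, 0 < (j : ℕ) →
        m (j : ℕ) = max (m ((j : ℕ) - 1))
          (Finset.univ.sup' (Finset.univ_nonempty_iff.mpr ⟨⟨0, hB⟩⟩) (s j)))
    (hl : ∀ j : Fin T, 0 < (j : ℕ) →
        l (j : ℕ) = Real.exp (m ((j : ℕ) - 1) - m (j : ℕ)) * l ((j : ℕ) - 1) +
          ∑ k, Real.exp (s j k - m (j : ℕ))) :
    m (T - 1) = Finset.univ.sup' (Finset.univ_nonempty_iff.mpr ⟨(⟨0, hT⟩, ⟨0, hB⟩)⟩)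
        (fun p : Fin T × Fin B => s p.1 p.2) ∧
    l (T - 1) = ∑ j : Fin T, ∑ k : Fin B, Real.exp (s j k - m (T - 1)) := by
  have hB' : (Finset.univ : Finset (Fin B)).Nonempty := Finset.univ_nonempty_iff.mpr ⟨⟨0, hB⟩⟩
  have key : ∀ n, ∀ hn : n < T,
      m n = (Finset.Iic (⟨n, hn⟩ : Fin T)).sup' Finset.nonempty_Iic
          (fun i => Finset.univ.sup' hB' (s i)) ∧
      l n = ∑ i ∈ Finset.Iic (⟨n, hn⟩ : Fin T), ∑ k, Real.exp (s i k - m n) := by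
    intro n
    induction n with
    | zero =>
      intro hn
      have hIic : Finset.Iic (⟨0, hn⟩ : Fin T) = {⟨0, hn⟩} := by
        ext i
        simp [Finset.mem_Iic, Fin.le_def, Nat.le_zero, Fin.ext_iff]
      constructor
      · rw [hm0]
        refine ((Finset.sup'_congr _ hIic fun x hx => rfl).trans ?_).symm
        rw [Finset.sup'_singleton]
      · rw [hIic, Finset.sum_singleton, hl0]
    | succ n ih =>
      intro hn
      have hn' : n < T := Nat.lt_of_succ_lt hn
      obtain ⟨ihm, ihl⟩ := ih hn'
      have hins : Finset.Iic (⟨n + 1, hn⟩ : Fin T) =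
          insert (⟨n + 1, hn⟩ : Fin T) (Finset.Iic (⟨n, hn'⟩ : Fin T)) := by
        ext i
        simp [Finset.mem_Iic, Fin.le_def, Fin.ext_iff, Nat.le_succ_iff_eq_or_le, or_comm]
      have hmrec := hm ⟨n + 1, hn⟩ (Nat.succ_pos n)
      have hlrec := hl ⟨n + 1, hn⟩ (Nat.succ_pos n)
      simp only [Nat.add_sub_cancel] at hmrec hlrec
      have hmval : m (n + 1) = (Finset.Iic (⟨n + 1, hn⟩ : Fin T)).sup' Finset.nonempty_Iic
          (fun i => Finset.univ.sup' hB' (s i)) := by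
        rw [hmrec, ihm, max_comm]
        refine ((Finset.sup'_congr _ hins fun x hx => rfl).trans ?_).symm
        rw [Finset.sup'_insert]
      refine ⟨hmval, ?_⟩
      rw [hins, Finset.sum_insert (by simp [Finset.mem_Iic, Fin.le_def])]
      rw [hlrec, ihl, Finset.mul_sum, add_comm]
      congr 1
      apply Finset.sum_congr rfl
      intro i _
      rw [Finset.mul_sum]
      apply Finset.sum_congr rfl
      intro k _
      rw [← Real.exp_add]
      ring_nf
  obtain ⟨km, kl⟩ := key (T - 1) (Nat.sub_lt hT Nat.one_pos)
  have hIicuniv : Finset.Iic (⟨T - 1, Nat.sub_lt hT Nat.one_pos⟩ : Fin T) =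
      Finset.univ := by
    apply Finset.eq_univ_iff_forall.mpr
    intro i
    simp only [Finset.mem_Iic, Fin.le_def]
    exact Nat.le_sub_one_of_lt i.isLt
  have huniv : (Finset.univ : Finset (Fin T × Fin B)).Nonempty :=
    ⟨(⟨0, hT⟩, ⟨0, hB⟩), Finset.mem_univ _⟩
  have hprod : ((Finset.univ : Finset (Fin T)) ×ˢ (Finset.univ : Finset (Fin B))).Nonempty :=
    ⟨(⟨0, hT⟩, ⟨0, hB⟩), by simp⟩
  constructor
  · rw [km]
    have h2 : Finset.univ.sup' (Finset.univ_nonempty_iff.mpr ⟨(⟨0, hT⟩, ⟨0, hB⟩)⟩)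
        (fun p : Fin T × Fin B => s p.1 p.2)
        = (Finset.univ ×ˢ Finset.univ).sup' hprod (fun p : Fin T × Fin B => s p.1 p.2) :=
      (Finset.sup'_congr _ Finset.univ_product_univ fun _ _ => rfl).symm
    rw [h2, Finset.sup'_product_left]
    exact Finset.sup'_congr _ hIicuniv fun _ _ => rfl
  · rw [kl, hIicuniv]
end

section
/- Let T ≥ 1 and B ≥ 1, let s : {1,…,T} → ({1,…,B} → ℝ) be T blocks of attention scores and v : {1,…,T} → ({1,…,B} → ℝ^d) the corresponding blocks of value vectors. Define recursively m_1 = max_k s_1(k), l_1 = Σ_k e^{s_1(k) − m_1}, o_1 = Σ_k e^{s_1(k) − m_1} • v_1(k), and for 2 ≤ j ≤ T: m_j = max(m_{j−1}, max_k s_j(k)), l_j = e^{m_{j−1} − m_j} · l_{j−1} + Σ_k e^{s_j(k) − m_j}, and o_j = e^{m_{j−1} − m_j} • o_{j−1} + Σ_k e^{s_j(k) − m_j} • v_j(k). Then (1/l_T) • o_T = Σ_{j=1}^{T} Σ_{k=1}^{B} softmax(s)_{(j,k)} • v_j(k), where softmax(s)_{(j,k)} = e^{s_j(k)} / Σ_{j',k'}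 e^{s_{j'}(k')}. That is, the blockwise rescaled accumulation followed by the final division by l_T computes the exact softmax-weighted attention output. -/
/-!
Dividing by `l` makes the running shifts `m j` cancel, so their choice (the running maximum)
only matters for floating-point stability. By induction, `o n` is `e^{-m n}` times the
unnormalised partial output `∑_{i ≤ n} ∑_k e^{s i k} • v i k`: the rescaling factor
`e^{m (n-1) - m n}` turns `e^{-m (n-1)}` into `e^{-m n}`. The exponential sum `l` is the same
accumulator for the constant values `1`. At the last block the common factor `e^{-m (T-1)}`
cancels in `l⁻¹ • o`.
-/

open Finset Real

section RescaledAccumulator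

variable {ι E : Type*} [Fintype ι] [AddCommGroup E] [Module ℝ E]

theorem exp_sub_smul (a b : ℝ) (x : E) : exp (a - b) • x = exp (-b) • exp a • x := by
  rw [smul_smul, ← exp_add, neg_add_eq_sub]

theorem exp_sub_smul_exp_neg_smul (a b : ℝ) (x : E) :
    exp (a - b) • exp (-a) • x = exp (-b) • x := by
  rw [smul_smul, ← exp_add]
  ring_nf

theorem Fin.filter_val_le_succ {T n : ℕ} (h : n + 1 < T) :
    univ.filter (fun i : Fin T ↦ (i : ℕ) ≤ n + 1) =
      insert ⟨n + 1, h⟩ (univ.filter fun i : Fin T ↦ (i : ℕ) ≤ n) := by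
  ext i
  simp only [mem_filter, mem_univ, true_and, mem_insert, Fin.ext_iff]
  omega

theorem rescaled_accumulator_eq (T : ℕ) (hT : 1 ≤ T) (s : Fin T → ι → ℝ) (v : Fin T → ι → E)
    (m : ℕ → ℝ) (o : ℕ → E) (h0 : o 0 = ∑ k, exp (s ⟨0, hT⟩ k - m 0) • v ⟨0, hT⟩ k)
    (hsucc : ∀ j : Fin T, 0 < (j : ℕ) →
      o j = exp (m (j - 1) - m j) • o (j - 1) + ∑ k, exp (s j k - m j) • v j k) :
    ∀ n < T, o n =
      exp (-m n) • ∑ i ∈ univ.filter (fun i : Fin T ↦ (i : ℕ) ≤ n), ∑ k, exp (s i k) • v i k := by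
  intro n
  induction n with
  | zero =>
    intro _
    have hfirst : univ.filter (fun i : Fin T ↦ (i : ℕ) ≤ 0) = {⟨0, hT⟩} := by
      ext i
      simp [Fin.ext_iff]
    simp only [h0, hfirst, sum_singleton, smul_sum, exp_sub_smul]
  | succ n ih =>
    intro hn
    have hstep := hsucc ⟨n + 1, hn⟩ n.succ_pos
    simp only [Nat.add_sub_cancel] at hstep
    rw [hstep, ih (by omega), exp_sub_smul_exp_neg_smul, Fin.filter_val_le_succ hn,
      sum_insert (by simp), smul_add, add_comm]
    simp only [exp_sub_smul, smul_sum]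

end RescaledAccumulator

theorem online_softmax_attention_output_general (T B d : ℕ) (hT : 1 ≤ T)
    (s : Fin T → Fin B → ℝ) (v : Fin T → Fin B → (Fin d → ℝ))
    (m l : ℕ → ℝ) (o : ℕ → (Fin d → ℝ))
    (hl0 : l 0 = ∑ k, Real.exp (s ⟨0, hT⟩ k - m 0))
    (ho0 : o 0 = ∑ k, Real.exp (s ⟨0, hT⟩ k - m 0) • v ⟨0, hT⟩ k)
    (hl : ∀ j : Fin T, 0 < (j : ℕ) →
        l (j : ℕ) = Real.exp (m ((j : ℕ) - 1) - m (j : ℕ)) * l ((j : ℕ) - 1) +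
          ∑ k, Real.exp (s j k - m (j : ℕ)))
    (ho : ∀ j : Fin T, 0 < (j : ℕ) →
        o (j : ℕ) = Real.exp (m ((j : ℕ) - 1) - m (j : ℕ)) • o ((j : ℕ) - 1) +
          ∑ k, Real.exp (s j k - m (j : ℕ)) • v j k) :
    (l (T - 1))⁻¹ • o (T - 1) =
      ∑ j : Fin T, ∑ k : Fin B,
        (Real.exp (s j k) / ∑ j' : Fin T, ∑ k' : Fin B, Real.exp (s j' k')) • v j k := by
  have hlast : T - 1 < T := by omega
  have hall : univ.filter (fun i : Fin T ↦ (i : ℕ) ≤ T - 1) = univ := by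
    ext i
    simp only [mem_filter, mem_univ, true_and, iff_true]
    omega
  have hoT := rescaled_accumulator_eq T hT s v m o ho0 ho (T - 1) hlast
  have hlT := rescaled_accumulator_eq T hT s (fun _ _ ↦ (1 : ℝ)) m l
    (by simpa only [smul_eq_mul, mul_one] using hl0)
    (by simpa only [smul_eq_mul, mul_one] using hl) (T - 1) hlast
  simp only [hall, smul_eq_mul, mul_one] at hoT hlT
  rw [hoT, hlT, smul_smul, mul_inv_rev, inv_mul_cancel_right₀ (exp_pos _).ne']
  simp only [smul_sum, smul_smul, div_eq_inv_mul]

/-- Online softmax correctness (full attention output): streaming over score and value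
blocks `j = 0,…,T−1` (0-indexed) with running maximum `m`, rescaled exponential sum `l`,
and rescaled output accumulator `o`, the final rescaled accumulator `(1/l (T−1)) • o (T−1)`
equals the exact softmax-weighted sum of all value vectors. -/
theorem online_softmax_attention_output (T B d : ℕ) (hT : 1 ≤ T) (hB : 1 ≤ B)
    (s : Fin T → Fin B → ℝ) (v : Fin T → Fin B → (Fin d → ℝ))
    (m l : ℕ → ℝ) (o : ℕ → (Fin d → ℝ))
    (hm0 : m 0 = Finset.univ.sup' (Finset.univ_nonempty_iff.mpr ⟨⟨0, hB⟩⟩) (s ⟨0, hT⟩))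
    (hl0 : l 0 = ∑ k, Real.exp (s ⟨0, hT⟩ k - m 0))
    (ho0 : o 0 = ∑ k, Real.exp (s ⟨0, hT⟩ k - m 0) • v ⟨0, hT⟩ k)
    (hm : ∀ j : Fin T, 0 < (j : ℕ) →
        m (j : ℕ) = max (m ((j : ℕ) - 1))
          (Finset.univ.sup' (Finset.univ_nonempty_iff.mpr ⟨⟨0, hB⟩⟩) (s j)))
    (hl : ∀ j : Fin T, 0 < (j : ℕ) →
        l (j : ℕ) = Real.exp (m ((j : ℕ) - 1) - m (j : ℕ)) * l ((j : ℕ) - 1) +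
          ∑ k, Real.exp (s j k - m (j : ℕ)))
    (ho : ∀ j : Fin T, 0 < (j : ℕ) →
        o (j : ℕ) = Real.exp (m ((j : ℕ) - 1) - m (j : ℕ)) • o ((j : ℕ) - 1) +
          ∑ k, Real.exp (s j k - m (j : ℕ)) • v j k) :
    (l (T - 1))⁻¹ • o (T - 1) =
      ∑ j : Fin T, ∑ k : Fin B,
        (Real.exp (s j k) / ∑ j' : Fin T, ∑ k' : Fin B, Real.exp (s j' k')) • v j k :=
  online_softmax_attention_output_general T B d hT s v m l o hl0 ho0 hl ho
end
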